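/- For the n-th Chebyshev polynomial T_n of the first kind and a fixed 0 < α < 2, as n → ∞ one has T_n(n^{2-α}/(n^{2-α}-1)) = e^{(√2 + o(1)) n^{α/2}}. -/

import Mathlib

/-!
For `y ≥ 1` one has `T_n(y) = cosh (n · arcosh y)`, and `log cosh s = |s| + O(1)`.
Since `1 + t²/2 ≤ cosh t ≤ exp (t²/2)`, the number `t = arcosh y` satisfies
`2 (1 - 1/y) ≤ t² ≤ 2 (y - 1)`. For `N = n^{2-α}` and `y = N/(N-1)` this reads
`2 ≤ N t² ≤ 2y`, so `n t = √(N t²) · n^{α/2} = (√2 + o(1)) n^{α/2}`.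
-/

open Filter Topology Real Polynomial.Chebyshev

namespace Real

lemma abs_sub_log_two_le_log_cosh (s : ℝ) : |s| - log 2 ≤ log (cosh s) := by
  rw [sub_le_iff_le_add, ← log_exp |s|, ← log_mul (cosh_pos s).ne' two_ne_zero]
  refine log_le_log (exp_pos _) ?_
  rw [cosh_eq]
  linarith [exp_abs_le s]

lemma log_cosh_le_abs (s : ℝ) : log (cosh s) ≤ |s| := by
  rw [log_le_iff_le_exp (cosh_pos s), cosh_eq]
  have h₁ : exp s ≤ exp |s| := exp_le_exp.2 (le_abs_self s)
  have h₂ : exp (-s) ≤ exp |s| := exp_le_exp.2 (neg_le_abs s)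
  linarith

lemma sq_le_two_mul_cosh_sub_one (t : ℝ) : t ^ 2 ≤ 2 * (cosh t - 1) := by
  have h := sum_le_hasSum (Finset.range 2)
    (fun n _ => div_nonneg (by rw [pow_mul]; positivity) (by positivity)) (hasSum_cosh t)
  norm_num [Finset.sum_range_succ] at h
  linarith

lemma two_mul_one_sub_inv_cosh_le_sq (t : ℝ) : 2 * (1 - (cosh t)⁻¹) ≤ t ^ 2 := by
  have h₁ := one_sub_inv_le_log_of_pos (cosh_pos t)
  have h₂ : log (cosh t) ≤ t ^ 2 / 2 :=
    (log_le_iff_le_exp (cosh_pos t)).2 (cosh_le_exp_half_sq t)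
  linarith

lemma tendsto_arcosh_sq_div_sub_one :
    Tendsto (fun y => arcosh y ^ 2 / (y - 1)) (𝓝[>] 1) (𝓝 2) := by
  have hlow : Tendsto (fun y : ℝ => 2 / y) (𝓝[>] 1) (𝓝 2) := by
    have h : Tendsto (fun y : ℝ => 2 / y) (𝓝 1) (𝓝 (2 / 1)) :=
      tendsto_const_nhds.div tendsto_id one_ne_zero
    simpa using h.mono_left nhdsWithin_le_nhds
  refine tendsto_of_tendsto_of_tendsto_of_le_of_le' hlow tendsto_const_nhds ?_ ?_ <;>
    filter_upwards [self_mem_nhdsWithin] with y (hy : 1 < y)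
  all_goals
    have hcosh : cosh (arcosh y) = y := cosh_arcosh hy.le
    have hy₁ : 0 < y - 1 := sub_pos.2 hy
  · have h := two_mul_one_sub_inv_cosh_le_sq (arcosh y)
    rw [hcosh] at h
    rw [le_div_iff₀ hy₁]
    calc 2 / y * (y - 1) = 2 * (1 - y⁻¹) := by field_simp
      _ ≤ _ := h
  · have h := sq_le_two_mul_cosh_sub_one (arcosh y)
    rw [hcosh] at h
    rwa [div_le_iff₀ hy₁]

lemma tendsto_log_cosh_div {ι : Type*} {l : Filter ι} {s p : ι → ℝ} {L : ℝ}
    (hp : Tendsto p l atTop) (hs : Tendsto (fun i => s i / p i) l (𝓝 L)) :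
    Tendsto (fun i => log (cosh (s i)) / p i) l (𝓝 |L|) := by
  have hlow : Tendsto (fun i => |s i / p i| - log 2 / p i) l (𝓝 |L|) := by
    simpa using hs.abs.sub (tendsto_const_nhds.div_atTop hp)
  refine tendsto_of_tendsto_of_tendsto_of_le_of_le' hlow hs.abs ?_ ?_ <;>
    filter_upwards [hp.eventually_gt_atTop 0] with i hi <;>
    rw [abs_div, abs_of_pos hi]
  · rw [← sub_div]
    exact div_le_div_of_nonneg_right (abs_sub_log_two_le_log_cosh _) hi.le
  · exact div_le_div_of_nonneg_right (log_cosh_le_abs _) hi.le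

lemma one_le_div_sub_one {N : ℝ} (hN : 1 < N) : 1 ≤ N / (N - 1) :=
  (one_le_div (sub_pos.2 hN)).2 (sub_le_self _ zero_le_one)

lemma tendsto_sqrt_mul_arcosh_div_sub_one {ι : Type*} {l : Filter ι} {N : ι → ℝ}
    (hN : Tendsto N l atTop) :
    Tendsto (fun i => √(N i) * arcosh (N i / (N i - 1))) l (𝓝 √2) := by
  have hN₁ : ∀ᶠ i in l, 1 < N i := hN.eventually_gt_atTop 1
  have hy : Tendsto (fun i => N i / (N i - 1)) l (𝓝[>] 1) := by
    refine tendsto_nhdsWithin_iff.2 ⟨?_, ?_⟩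
    · have hN' : Tendsto (fun i => N i - 1) l atTop := by
        simpa [sub_eq_add_neg] using tendsto_atTop_add_const_right l (-1) hN
      have h : Tendsto (fun i => 1 + (N i - 1)⁻¹) l (𝓝 (1 + 0)) :=
        tendsto_const_nhds.add hN'.inv_tendsto_atTop
      rw [add_zero] at h
      refine h.congr' ?_
      filter_upwards [hN₁] with i hi
      have : N i - 1 ≠ 0 := by linarith
      field_simp
      ring
    · filter_upwards [hN₁] with i hi
      exact (one_lt_div (sub_pos.2 hi)).2 (sub_lt_self _ one_pos)
  have hsq := ((hy.mono_right nhdsWithin_le_nhds).mul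
    (tendsto_arcosh_sq_div_sub_one.comp hy)).sqrt
  rw [one_mul] at hsq
  refine hsq.congr' ?_
  filter_upwards [hN₁] with i hi
  have ht : 0 ≤ arcosh (N i / (N i - 1)) := arcosh_nonneg (one_le_div_sub_one hi)
  set t := arcosh (N i / (N i - 1))
  have hprod : N i / (N i - 1) * (t ^ 2 / (N i / (N i - 1) - 1)) = N i * t ^ 2 := by
    have : N i - 1 ≠ 0 := by linarith
    field_simp
    ring
  rw [Function.comp_apply, hprod, sqrt_mul (by linarith), sqrt_sq ht]

end Real

lemma Polynomial.Chebyshev.T_real_eval_of_one_le {x : ℝ} (hx : 1 ≤ x) (n : ℤ) :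
    (T ℝ n).eval x = cosh (n * arcosh x) := by
  rw [← T_real_cosh, cosh_arcosh hx]

lemma tendsto_log_T_eval_div_rpow {α : ℝ} (hα0 : 0 < α) (hα2 : α < 2) :
    Tendsto (fun n : ℕ => log ((T ℝ n).eval ((n : ℝ) ^ (2 - α) / ((n : ℝ) ^ (2 - α) - 1)))
      / (n : ℝ) ^ (α / 2)) atTop (𝓝 √2) := by
  have hN : Tendsto (fun n : ℕ => (n : ℝ) ^ (2 - α)) atTop atTop :=
    (tendsto_rpow_atTop (by linarith)).comp tendsto_natCast_atTop_atTop
  have hp : Tendsto (fun n : ℕ => (n : ℝ) ^ (α / 2)) atTop atTop :=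
    (tendsto_rpow_atTop (by linarith)).comp tendsto_natCast_atTop_atTop
  have hs := (tendsto_sqrt_mul_arcosh_div_sub_one hN).congr' (f₂ := fun n : ℕ =>
    n * arcosh ((n : ℝ) ^ (2 - α) / ((n : ℝ) ^ (2 - α) - 1)) / (n : ℝ) ^ (α / 2)) ?_
  · rw [← abs_of_nonneg (sqrt_nonneg 2)]
    refine (tendsto_log_cosh_div hp hs).congr' ?_
    filter_upwards [hN.eventually_gt_atTop 1] with n hn
    rw [T_real_eval_of_one_le (one_le_div_sub_one hn)]
    norm_cast
  · filter_upwards [eventually_gt_atTop 0] with n hn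
    have hn₀ : (0 : ℝ) < n := Nat.cast_pos.2 hn
    rw [mul_div_right_comm, sqrt_eq_rpow, ← rpow_mul hn₀.le,
      show (2 - α) * (1 / 2) = 1 - α / 2 by ring, rpow_sub hn₀, rpow_one]

theorem chebyshev_growth (α : ℝ) (hα0 : 0 < α) (hα2 : α < 2) :
    ∃ f : ℕ → ℝ, Tendsto f atTop (nhds 0) ∧
      ∀ n : ℕ, 2 ≤ n →
        (Polynomial.Chebyshev.T ℝ (n : ℤ)).eval
            ((n : ℝ) ^ (2 - α) / ((n : ℝ) ^ (2 - α) - 1))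
          = Real.exp ((Real.sqrt 2 + f n) * (n : ℝ) ^ (α / 2)) := by
  refine ⟨fun n => log ((T ℝ n).eval ((n : ℝ) ^ (2 - α) / ((n : ℝ) ^ (2 - α) - 1)))
      / (n : ℝ) ^ (α / 2) - √2,
    by simpa using (tendsto_log_T_eval_div_rpow hα0 hα2).sub_const √2, fun n hn => ?_⟩
  have hn₁ : (1 : ℝ) < n := by exact_mod_cast hn
  have hN : 1 < (n : ℝ) ^ (2 - α) := one_lt_rpow hn₁ (by linarith)
  have hT : 0 < (T ℝ n).eval ((n : ℝ) ^ (2 - α) / ((n : ℝ) ^ (2 - α) - 1)) := by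
    rw [T_real_eval_of_one_le (one_le_div_sub_one hN)]
    exact cosh_pos _
  rw [add_sub_cancel, div_mul_cancel₀ _ (rpow_pos_of_pos (by linarith) _).ne', exp_log hT]
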